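/- Let m : ℝ³ → ℝ³ be C¹ on an open neighborhood of the closure of Ω, and let u₀ : ℝ³ → ℝ be C² on an open neighborhood of the closure of Ω with Δu₀ = div m on Ω and u₀ = 0 on Γ. Define ψ : ℝ³ → ℝ by ψ(y) = ⟨m(y) − ∇u₀(y), n(y)⟩ and the single layer potential u₁(x) = (1/(4π)) ∫_Γ ψ(y)/‖x − y‖ dσ(y). Assume u₁ is C¹ on an open neighborhood of the closure of Ω, C² on Ω with Δu₁ = 0 on Ω, and that (x, y) ↦ ψ(x)ψ(y)/‖x − y‖ is integrable on Γ × Γ with respect to σ ⊗ σ. Then the magnetostatic energy e_d := ∫_Ω ⟨m(x), ∇u₀(x) + ∇u₁(x)⟩ dx satisfies e_d = ∫_Ω ‖∇u₀(x)‖² dx + (1/(4π)) ∫_Γ ∫_Γ ψ(x)ψ(y)/‖x − y‖ dσ(y) dσ(x). -/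

import Mathlib

/-!
Put `W = m - ∇u₀`; it is divergence-free in `Ω` because `Δu₀ = div m`. Gauss–Green applied to
`h • W` gives `∫_Ω ⟪∇h, W⟫ = ∫_Γ h ⟪W, n⟫ dσ` for every `C¹` function `h`. For `h = u₀`, which
vanishes on `Γ`, this says `∫_Ω ⟪m, ∇u₀⟫ = ∫_Ω ‖∇u₀‖²`; for `h = u₁` it says
`∫_Ω ⟪W, ∇u₁⟫ = ∫_Γ u₁ ψ dσ`, which is the double integral by the definition of `u₁`.

The cross term `∫_Ω ⟪∇u₀, ∇u₁⟫` vanishes because `u₁` is harmonic and `u₀ = 0` on `Γ`. As `u₁` is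
only `C²` inside `Ω`, Gauss–Green is applied to `(u₀ χₖ) • ∇u₁` for smooth cutoffs `χₖ` that vanish
near `Γ`, equal `1` farther than `3/(k+1)` from it and satisfy `dist(·, Ωᶜ) ‖∇χₖ‖ ≤ 3`. Since
`|u₀| ≤ L dist(·, Ωᶜ)`, the error terms `u₀ ⟪∇χₖ, ∇u₁⟫` are uniformly bounded and dominated
convergence applies.
-/

open MeasureTheory Real
noncomputable section

abbrev R3 := EuclideanSpace ℝ (Fin 3)

/-- i-th partial derivative -/
def pd (i : Fin 3) (f : R3 → ℝ) (x : R3) : ℝ := fderiv ℝ f x (EuclideanSpace.single i 1)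

/-- divergence: div F = ∑ᵢ ∂ᵢFᵢ -/
def vdiv (F : R3 → R3) (x : R3) : ℝ := ∑ i, pd i (fun y => F y i) x

/-- Laplacian: Δu = div(∇u) -/
def lap (u : R3 → ℝ) (x : R3) : ℝ := vdiv (fun y => gradient u y) x

open Metric Filter Topology Set
open scoped Convolution

section Gradient

variable {F : Type*} [NormedAddCommGroup F] [InnerProductSpace ℝ F] [CompleteSpace F]

theorem norm_gradient (f : F → ℝ) (x : F) : ‖gradient f x‖ = ‖fderiv ℝ f x‖ := by
  rw [← toDual_gradient, LinearIsometryEquiv.norm_map]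

theorem ContDiffOn.gradient_of_isOpen {f : F → ℝ} {s : Set F} {m n : WithTop ℕ∞}
    (hf : ContDiffOn ℝ n f s) (hs : IsOpen s) (hmn : m + 1 ≤ n) :
    ContDiffOn ℝ m (gradient f) s :=
  (InnerProductSpace.toDual ℝ F).symm.contDiff.comp_contDiffOn (hf.fderiv_of_isOpen hs hmn)

end Gradient

theorem inner_gradient_eq_sum_pd (h : R3 → ℝ) (v x : R3) :
    inner ℝ (gradient h x) v = ∑ i, v i * pd i h x := by
  rw [PiLp.inner_apply]
  refine Finset.sum_congr rfl fun i _ => ?_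
  rw [pd, ← inner_gradient_left, EuclideanSpace.inner_single_right]
  simp

theorem vdiv_smul {h : R3 → ℝ} {G : R3 → R3} {x : R3} (hh : DifferentiableAt ℝ h x)
    (hG : DifferentiableAt ℝ G x) :
    vdiv (fun y => h y • G y) x = inner ℝ (gradient h x) (G x) + h x * vdiv G x := by
  have hGi := differentiableAt_euclidean.1 hG
  simp only [vdiv, pd, PiLp.smul_apply, smul_eq_mul, fderiv_fun_mul hh (hGi _),
    inner_gradient_eq_sum_pd, Finset.mul_sum, ← Finset.sum_add_distrib,
    add_apply, smul_apply]
  exact Finset.sum_congr rfl fun i _ => by ring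

theorem vdiv_sub {A B : R3 → R3} {x : R3} (hA : DifferentiableAt ℝ A x)
    (hB : DifferentiableAt ℝ B x) :
    vdiv (fun y => A y - B y) x = vdiv A x - vdiv B x := by
  simp only [vdiv, pd, PiLp.sub_apply, ← Finset.sum_sub_distrib,
    fderiv_fun_sub (differentiableAt_euclidean.1 hA _) (differentiableAt_euclidean.1 hB _),
    sub_apply]

theorem abs_le_mul_infDist_compl {E : Type*} [NormedAddCommGroup E] [NormedSpace ℝ E]
    [ProperSpace E] {Ω : Set E} (hΩ : IsOpen Ω) (hΩc : Ωᶜ.Nonempty) {f : E → ℝ} {L : ℝ}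
    (hf : ∀ x ∈ closure Ω, DifferentiableAt ℝ f x) (hL : ∀ x ∈ closure Ω, ‖fderiv ℝ f x‖ ≤ L)
    (hf0 : ∀ y ∈ frontier Ω, f y = 0) {x : E} (hx : x ∈ Ω) :
    |f x| ≤ L * infDist x Ωᶜ := by
  obtain ⟨z, hz, hxz⟩ := hΩ.isClosed_compl.exists_infDist_eq_dist hΩc x
  have hpos : 0 < infDist x Ωᶜ :=
    (hΩ.isClosed_compl.notMem_iff_infDist_pos hΩc).1 (notMem_compl_iff.2 hx)
  have hball : closedBall x (infDist x Ωᶜ) ⊆ closure Ω := by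
    rw [← closure_ball x hpos.ne']
    exact closure_mono ball_infDist_compl_subset
  have hzΩ : z ∈ closedBall x (infDist x Ωᶜ) := by rw [mem_closedBall, dist_comm, hxz]
  have hmvt := (convex_closedBall x _).norm_image_sub_le_of_norm_fderiv_le
    (fun y hy => hf y (hball hy)) (fun y hy => hL y (hball hy)) (mem_closedBall_self hpos.le) hzΩ
  rwa [hf0 z (hΩ.frontier_eq ▸ ⟨hball hzΩ, hz⟩), zero_sub, norm_neg, Real.norm_eq_abs,
    ← dist_eq_norm, dist_comm, ← hxz] at hmvt

theorem norm_fderiv_mul_le_of_infDist {E : Type*} [NormedAddCommGroup E] [NormedSpace ℝ E]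
    {s : Set E} {u χ : E → ℝ} {x : E} {L C : ℝ} (hu : DifferentiableAt ℝ u x)
    (hχ : DifferentiableAt ℝ χ x) (hux : |u x| ≤ L * infDist x s) (hDu : ‖fderiv ℝ u x‖ ≤ L)
    (hχx : |χ x| ≤ 1) (hDχ : infDist x s * ‖fderiv ℝ χ x‖ ≤ C) :
    ‖fderiv ℝ (fun y => u y * χ y) x‖ ≤ (C + 1) * L := by
  have hL : 0 ≤ L := (norm_nonneg _).trans hDu
  rw [fderiv_fun_mul hu hχ]
  calc ‖u x • fderiv ℝ χ x + χ x • fderiv ℝ u x‖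
      ≤ |u x| * ‖fderiv ℝ χ x‖ + |χ x| * ‖fderiv ℝ u x‖ := by
        simpa only [norm_smul, Real.norm_eq_abs] using
          norm_add_le (u x • fderiv ℝ χ x) (χ x • fderiv ℝ u x)
    _ ≤ L * (infDist x s * ‖fderiv ℝ χ x‖) + 1 * L := by
        rw [← mul_assoc]
        exact add_le_add (mul_le_mul_of_nonneg_right hux (norm_nonneg _))
          (mul_le_mul hχx hDu (norm_nonneg _) zero_le_one)
    _ ≤ L * C + 1 * L := by gcongr
    _ = (C + 1) * L := by ring

section Cutoff

variable {E : Type*} [NormedAddCommGroup E] [NormedSpace ℝ E] [FiniteDimensional ℝ E]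

theorem ContDiffBump.abs_integral_normed_mul_le [MeasurableSpace E] [BorelSpace E]
    (φ : ContDiffBump (0 : E)) (μ : Measure E) [μ.IsAddHaarMeasure]
    {g : E → ℝ} {C : ℝ} (hg : ∀ t, |g t| ≤ C) :
    |∫ t, φ.normed μ t * g t ∂μ| ≤ C :=
  calc |∫ t, φ.normed μ t * g t ∂μ|
      ≤ ∫ t, φ.normed μ t * C ∂μ := by
        rw [← Real.norm_eq_abs]
        refine norm_integral_le_of_norm_le (φ.integrable_normed.mul_const C)
          (ae_of_all _ fun t => ?_)
        rw [norm_mul, Real.norm_of_nonneg (φ.nonneg_normed t)]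
        exact mul_le_mul_of_nonneg_left (hg t) (φ.nonneg_normed t)
    _ = C := by rw [integral_mul_const, φ.integral_normed, one_mul]

theorem ContDiffBump.lipschitzWith_normed_convolution [MeasurableSpace E] [BorelSpace E]
    (φ : ContDiffBump (0 : E)) (μ : Measure E) [μ.IsAddHaarMeasure]
    {g : E → ℝ} {K : NNReal} (hg : LipschitzWith K g) :
    LipschitzWith K (φ.normed μ ⋆[ContinuousLinearMap.lsmul ℝ ℝ, μ] g) := by
  have hconv := (φ.hasCompactSupport_normed (μ := μ)).convolutionExists_left
    (ContinuousLinearMap.lsmul ℝ ℝ) φ.continuous_normed (hg.continuous.locallyIntegrable (μ := μ))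
  refine LipschitzWith.of_dist_le_mul fun x y => ?_
  rw [Real.dist_eq, convolution_def, convolution_def, ← integral_sub (hconv x) (hconv y)]
  simp only [ContinuousLinearMap.lsmul_apply, smul_eq_mul, ← mul_sub]
  refine φ.abs_integral_normed_mul_le μ fun t => ?_
  simpa [Real.dist_eq] using hg.dist_le_mul (x - t) (y - t)

/-- The ramp `clamp (d/δ - 1)` of the distance `d` to `s`, mollified at scale `δ/2`. -/
theorem exists_contDiff_cutoff_infDist (s : Set E) {δ : ℝ} (hδ : 0 < δ) :
    ∃ χ : E → ℝ, ContDiff ℝ 1 χ ∧ (∀ x, |χ x| ≤ 1) ∧ (∀ x ∈ s, χ =ᶠ[𝓝 x] 0) ∧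
      (∀ x, 3 * δ < infDist x s → χ =ᶠ[𝓝 x] 1) ∧
      ∀ x, infDist x s * ‖fderiv ℝ χ x‖ ≤ 3 := by
  borelize E
  set μ : Measure E := Measure.addHaar
  set ramp : E → ℝ := fun x => max 0 (min 1 (infDist x s / δ - 1))
  have hramp : LipschitzWith (Real.toNNReal δ⁻¹) ramp := by
    have : LipschitzWith (Real.toNNReal δ⁻¹) fun r : ℝ => r / δ - 1 :=
      LipschitzWith.of_dist_le_mul fun a b => by
        rw [Real.dist_eq, Real.dist_eq, Real.coe_toNNReal _ (by positivity),
          show a / δ - 1 - (b / δ - 1) = δ⁻¹ * (a - b) by ring, abs_mul, abs_of_pos (by positivity)]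
    exact (((this.const_min 1).const_max 0).comp (lipschitz_infDist_pt s)).weaken (mul_one _).le
  set φ : ContDiffBump (0 : E) := ⟨δ / 4, δ / 2, by positivity, by linarith⟩
  set χ := φ.normed μ ⋆[ContinuousLinearMap.lsmul ℝ ℝ, μ] ramp
  have hlocal : ∀ x c, (∀ y ∈ ball x (δ / 2), ramp y = c) → χ x = c := fun x c hc => by
    have hx := hc x (mem_ball_self (by positivity))
    rw [← hx]
    exact φ.normed_convolution_eq_right fun y hy => (hc y hy).trans hx.symm
  have hone : ∀ x, 3 * δ < infDist x s → χ =ᶠ[𝓝 x] 1 := fun x hx => by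
    filter_upwards [(isOpen_lt continuous_const (continuous_infDist_pt s)).mem_nhds hx] with y hy
    refine hlocal y 1 fun z hz => ?_
    have hz1 : 1 ≤ infDist z s / δ - 1 := by
      rw [le_sub_iff_add_le, le_div_iff₀ hδ]
      linarith [infDist_le_infDist_add_dist (x := y) (y := z) (s := s), mem_ball'.1 hz]
    simp only [ramp, min_eq_left hz1, max_eq_right zero_le_one]
  refine ⟨χ, φ.hasCompactSupport_normed.contDiff_convolution_left _ φ.contDiff_normed
    hramp.continuous.locallyIntegrable, fun x => ?_, fun x hx => ?_, hone, fun x => ?_⟩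
  · simp only [χ, convolution_def, ContinuousLinearMap.lsmul_apply, smul_eq_mul]
    refine φ.abs_integral_normed_mul_le μ fun t => abs_le.2 ⟨?_, ?_⟩
    · linarith [le_max_left 0 (min 1 (infDist (x - t) s / δ - 1))]
    · exact max_le zero_le_one (min_le_left _ _)
  · have hx0 : infDist x s < δ / 2 := by rw [infDist_zero_of_mem hx]; positivity
    filter_upwards [(isOpen_lt (continuous_infDist_pt s) continuous_const).mem_nhds hx0] with y hy
    refine hlocal y 0 fun z hz => max_eq_left ((min_le_right _ _).trans ?_)
    rw [sub_nonpos, div_le_one hδ]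
    linarith [infDist_le_infDist_add_dist (x := z) (y := y) (s := s), mem_ball.1 hz]
  · by_cases hx : 3 * δ < infDist x s
    · rw [(hone x hx).fderiv_eq]
      simp
    · have hχ' :=
        norm_fderiv_le_of_lipschitz ℝ (x₀ := x) (φ.lipschitzWith_normed_convolution μ hramp)
      rw [Real.coe_toNNReal _ (by positivity)] at hχ'
      calc infDist x s * ‖fderiv ℝ χ x‖ ≤ (3 * δ) * δ⁻¹ :=
            mul_le_mul (not_lt.1 hx) hχ' (norm_nonneg _) (by positivity)
        _ = 3 := by field_simp

theorem exists_seq_contDiff_cutoff_infDist (s : Set E) :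
    ∃ χ : ℕ → E → ℝ, (∀ k, ContDiff ℝ 1 (χ k)) ∧ (∀ k x, |χ k x| ≤ 1) ∧
      (∀ k, ∀ x ∈ s, χ k =ᶠ[𝓝 x] 0) ∧ (∀ x, 0 < infDist x s → ∀ᶠ k in atTop, χ k =ᶠ[𝓝 x] 1) ∧
      ∀ k x, infDist x s * ‖fderiv ℝ (χ k) x‖ ≤ 3 := by
  choose χ hχ hχ1 hχ0 hχ_one hχ_deriv using fun k : ℕ =>
    exists_contDiff_cutoff_infDist s (Nat.one_div_pos_of_nat (α := ℝ) (n := k))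
  refine ⟨χ, hχ, hχ1, hχ0, fun x hx => ?_, hχ_deriv⟩
  have hδ : Tendsto (fun k : ℕ => 3 * (1 / ((k : ℝ) + 1))) atTop (𝓝 0) := by
    simpa using tendsto_one_div_add_atTop_nhds_zero_nat.const_mul (3 : ℝ)
  exact (hδ.eventually (gt_mem_nhds hx)).mono fun k hk => hχ_one k x hk

end Cutoff

theorem setIntegral_eq_zero_of_tendsto {α G : Type*} [MeasurableSpace α] [NormedAddCommGroup G]
    [NormedSpace ℝ G] {μ : Measure α} {s : Set α} (hs : MeasurableSet s) (hμs : μ s ≠ ⊤)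
    {Φ : ℕ → α → G} {f : α → G} {C : ℝ}
    (hΦ_meas : ∀ k, AEStronglyMeasurable (Φ k) (μ.restrict s))
    (hΦ_bd : ∀ k, ∀ x ∈ s, ‖Φ k x‖ ≤ C)
    (hΦ_lim : ∀ x ∈ s, Tendsto (Φ · x) atTop (𝓝 (f x)))
    (hΦ_zero : ∀ k, ∫ x in s, Φ k x ∂μ = 0) :
    ∫ x in s, f x ∂μ = 0 := by
  have hlim := tendsto_integral_of_dominated_convergence (fun _ => C) hΦ_meas
    (integrableOn_const hμs) (fun k => ae_restrict_of_forall_mem hs (hΦ_bd k))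
    (ae_restrict_of_forall_mem hs hΦ_lim)
  simp only [hΦ_zero] at hlim
  exact tendsto_nhds_unique tendsto_const_nhds hlim |>.symm

def HasGaussGreen (Ω : Set R3) (σ : Measure R3) (n : R3 → R3) : Prop :=
  ∀ (F : R3 → R3) (U : Set R3), IsOpen U → closure Ω ⊆ U → ContDiffOn ℝ 1 F U →
    ∫ x in Ω, vdiv F x = ∫ y, (inner ℝ (F y) (n y) : ℝ) ∂σ

namespace HasGaussGreen

variable {Ω : Set R3} {σ : Measure R3} {n : R3 → R3}

theorem integral_inner_gradient_of_vdiv_eq_zero (hGG : HasGaussGreen Ω σ n) (hΩ : IsOpen Ω)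
    {U : Set R3} (hU : IsOpen U) (hΩU : closure Ω ⊆ U) {h : R3 → ℝ} {W : R3 → R3}
    (hh : ContDiffOn ℝ 1 h U) (hW : ContDiffOn ℝ 1 W U) (hdiv : ∀ x ∈ Ω, vdiv W x = 0) :
    ∫ x in Ω, inner ℝ (gradient h x) (W x) = ∫ y, h y * inner ℝ (W y) (n y) ∂σ :=
  calc ∫ x in Ω, inner ℝ (gradient h x) (W x)
      = ∫ x in Ω, vdiv (fun y => h y • W y) x :=
        setIntegral_congr_fun hΩ.measurableSet fun x hx => by
          have hxU : U ∈ 𝓝 x := hU.mem_nhds (hΩU (subset_closure hx))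
          rw [vdiv_smul ((hh.differentiableOn one_ne_zero).differentiableAt hxU)
            ((hW.differentiableOn one_ne_zero).differentiableAt hxU), hdiv x hx, mul_zero, add_zero]
    _ = ∫ y, inner ℝ (h y • W y) (n y) ∂σ := hGG _ U hU hΩU (hh.smul hW)
    _ = ∫ y, h y * inner ℝ (W y) (n y) ∂σ := by simp_rw [real_inner_smul_left]

theorem integral_inner_gradient_mul_eq_zero (hGG : HasGaussGreen Ω σ n)
    (hσ : ∀ᵐ y ∂σ, y ∉ Ω) (hΩ : IsOpen Ω) {u v χ : R3 → ℝ} (hu : ContDiffOn ℝ 1 u Ω)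
    (hv : ContDiffOn ℝ 2 v Ω) (hv_harm : ∀ x ∈ Ω, lap v x = 0) (hχ : ContDiff ℝ 1 χ)
    (hχ0 : ∀ x ∉ Ω, χ =ᶠ[𝓝 x] 0) :
    ∫ x in Ω, inner ℝ (gradient (fun y => u y * χ y) x) (gradient v x) = 0 := by
  set F : R3 → R3 := fun y => (u y * χ y) • gradient v y
  have huχ : ContDiffOn ℝ 1 (fun y => u y * χ y) Ω := hu.mul hχ.contDiffOn
  have hgv : ContDiffOn ℝ 1 (gradient v) Ω := hv.gradient_of_isOpen hΩ (by norm_num)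
  have hF : ContDiff ℝ 1 F := contDiff_iff_contDiffAt.2 fun x => by
    by_cases hx : x ∈ Ω
    · exact (huχ.smul hgv).contDiffAt (hΩ.mem_nhds hx)
    · exact (contDiffAt_const (c := (0 : R3))).congr_of_eventuallyEq
        ((hχ0 x hx).mono fun y hy => by simp [F, hy])
  calc ∫ x in Ω, inner ℝ (gradient (fun y => u y * χ y) x) (gradient v x)
      = ∫ x in Ω, vdiv F x :=
        setIntegral_congr_fun hΩ.measurableSet fun x hx => by
          have hxΩ : Ω ∈ 𝓝 x := hΩ.mem_nhds hx
          rw [vdiv_smul ((huχ.differentiableOn one_ne_zero).differentiableAt hxΩ)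
            ((hgv.differentiableOn one_ne_zero).differentiableAt hxΩ),
            show vdiv (gradient v) x = 0 from hv_harm x hx, mul_zero, add_zero]
    _ = ∫ y, inner ℝ (F y) (n y) ∂σ := hGG F univ isOpen_univ (subset_univ _) hF.contDiffOn
    _ = 0 := integral_eq_zero_of_ae <| hσ.mono fun y hy => by
        simp [F, (hχ0 y hy).eq_of_nhds]

theorem integral_inner_gradient_eq_zero_of_harmonic (hGG : HasGaussGreen Ω σ n)
    (hσ : ∀ᵐ y ∂σ, y ∉ Ω) (hΩ : IsOpen Ω) (hΩb : Bornology.IsBounded Ω) {U : Set R3}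
    (hU : IsOpen U) (hΩU : closure Ω ⊆ U) {u v : R3 → ℝ} (hu : ContDiffOn ℝ 1 u U)
    (hu0 : ∀ y ∈ frontier Ω, u y = 0) (hv : ContDiffOn ℝ 1 v U) (hv2 : ContDiffOn ℝ 2 v Ω)
    (hv_harm : ∀ x ∈ Ω, lap v x = 0) :
    ∫ x in Ω, inner ℝ (gradient u x) (gradient v x) = 0 := by
  have hK := hΩb.isCompact_closure
  obtain ⟨L, hL⟩ := hK.exists_bound_of_continuousOn
    ((hu.continuousOn_fderiv_of_isOpen hU le_rfl).mono hΩU)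
  obtain ⟨M, hM⟩ := hK.exists_bound_of_continuousOn
    ((hv.gradient_of_isOpen hU (m := 0) (by norm_num)).continuousOn.mono hΩU)
  have hΩc : Ωᶜ.Nonempty := nonempty_compl.2 fun h => NormedSpace.unbounded_univ ℝ R3 (h ▸ hΩb)
  have hΩK : Ω ⊆ closure Ω := subset_closure
  have hdu : ∀ x ∈ closure Ω, DifferentiableAt ℝ u x := fun x hx =>
    (hu.differentiableOn one_ne_zero).differentiableAt (hU.mem_nhds (hΩU hx))
  have hu_bd : ∀ x ∈ Ω, |u x| ≤ L * infDist x Ωᶜ := fun x hx =>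
    abs_le_mul_infDist_compl hΩ hΩc hdu hL hu0 hx
  obtain ⟨χ, hχ, hχ1, hχ0, hχ_one, hχ_deriv⟩ := exists_seq_contDiff_cutoff_infDist Ωᶜ
  set Φ : ℕ → R3 → ℝ := fun k x =>
    inner ℝ (gradient (fun y => u y * χ k y) x) (gradient v x)
  refine setIntegral_eq_zero_of_tendsto (Φ := Φ) (C := (3 + 1) * L * M) hΩ.measurableSet
    hΩb.measure_lt_top.ne (fun k => ?_) (fun k x hx => ?_) (fun x hx => ?_) (fun k => ?_)
  · exact ((((hu.mono (hΩK.trans hΩU)).mul (hχ k).contDiffOn).gradient_of_isOpen hΩ (m := 0)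
      (by norm_num)).continuousOn.inner
      (hv2.gradient_of_isOpen hΩ (m := 0) (by norm_num)).continuousOn).aestronglyMeasurable
      hΩ.measurableSet
  · have hgrad : ‖gradient (fun y => u y * χ k y) x‖ ≤ (3 + 1) * L := by
      rw [norm_gradient]
      exact norm_fderiv_mul_le_of_infDist (hdu x (hΩK hx)) ((hχ k).differentiable one_ne_zero x)
        (hu_bd x hx) (hL x (hΩK hx)) (hχ1 k x) (hχ_deriv k x)
    calc ‖Φ k x‖ ≤ ‖gradient (fun y => u y * χ k y) x‖ * ‖gradient v x‖ := norm_inner_le_norm _ _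
      _ ≤ (3 + 1) * L * M :=
        mul_le_mul hgrad (hM x (hΩK hx)) (norm_nonneg _) ((norm_nonneg _).trans hgrad)
  · have hpos : 0 < infDist x Ωᶜ :=
      (hΩ.isClosed_compl.notMem_iff_infDist_pos hΩc).1 (notMem_compl_iff.2 hx)
    refine tendsto_const_nhds.congr' ((hχ_one x hpos).mono fun k hk => ?_)
    have huχ : (fun y => u y * χ k y) =ᶠ[𝓝 x] u := hk.mono fun y hy => by simp [hy]
    simp only [Φ, huχ.gradient_eq]
  · exact hGG.integral_inner_gradient_mul_eq_zero hσ hΩ (hu.mono (hΩK.trans hΩU)) hv2 hv_harm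
      (hχ k) (hχ0 k)

theorem setIntegral_inner_add_gradient (hGG : HasGaussGreen Ω σ n)
    (hσ : ∀ᵐ y ∂σ, y ∈ frontier Ω) (hΩ : IsOpen Ω) (hΩb : Bornology.IsBounded Ω) {U : Set R3}
    (hU : IsOpen U) (hΩU : closure Ω ⊆ U) {W : R3 → R3} (hW : ContDiffOn ℝ 1 W U)
    (hW_div : ∀ x ∈ Ω, vdiv W x = 0) {u₀ u₁ : R3 → ℝ} (hu₀ : ContDiffOn ℝ 1 u₀ U)
    (hu₀Γ : ∀ y ∈ frontier Ω, u₀ y = 0) (hu₁ : ContDiffOn ℝ 1 u₁ U) (hu₁2 : ContDiffOn ℝ 2 u₁ Ω)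
    (hu₁_harm : ∀ x ∈ Ω, lap u₁ x = 0) :
    ∫ x in Ω, inner ℝ (W x + gradient u₀ x) (gradient u₀ x + gradient u₁ x) =
      (∫ x in Ω, ‖gradient u₀ x‖ ^ 2) + ∫ y, u₁ y * inner ℝ (W y) (n y) ∂σ := by
  have e₀ : ∫ x in Ω, inner ℝ (gradient u₀ x) (W x) = 0 := by
    rw [hGG.integral_inner_gradient_of_vdiv_eq_zero hΩ hU hΩU hu₀ hW hW_div]
    exact integral_eq_zero_of_ae (hσ.mono fun y hy => by simp [hu₀Γ y hy])
  have e₁ := hGG.integral_inner_gradient_of_vdiv_eq_zero hΩ hU hΩU hu₁ hW hW_div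
  have e₂ : ∫ x in Ω, inner ℝ (gradient u₀ x) (gradient u₁ x) = 0 :=
    hGG.integral_inner_gradient_eq_zero_of_harmonic (hσ.mono fun y hy => (hΩ.frontier_eq ▸ hy).2)
      hΩ hΩb hU hΩU hu₀ hu₀Γ hu₁ hu₁2 hu₁_harm
  have hint : ∀ f : R3 → ℝ, ContinuousOn f (closure Ω) → IntegrableOn f Ω := fun f hf =>
    (hf.integrableOn_compact hΩb.isCompact_closure).mono_set subset_closure
  have hc₀ : ContinuousOn (gradient u₀) (closure Ω) :=
    (hu₀.gradient_of_isOpen hU (m := 0) (by norm_num)).continuousOn.mono hΩU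
  have hc₁ : ContinuousOn (gradient u₁) (closure Ω) :=
    (hu₁.gradient_of_isOpen hU (m := 0) (by norm_num)).continuousOn.mono hΩU
  have hcW : ContinuousOn W (closure Ω) := hW.continuousOn.mono hΩU
  calc ∫ x in Ω, inner ℝ (W x + gradient u₀ x) (gradient u₀ x + gradient u₁ x)
      = ∫ x in Ω, (‖gradient u₀ x‖ ^ 2 + inner ℝ (gradient u₀ x) (W x) +
          inner ℝ (gradient u₁ x) (W x) + inner ℝ (gradient u₀ x) (gradient u₁ x)) := by
        refine integral_congr_ae (ae_of_all _ fun x => ?_)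
        simp only [inner_add_left, inner_add_right, real_inner_self_eq_norm_sq,
          real_inner_comm (W x)]
        ring
    _ = (∫ x in Ω, ‖gradient u₀ x‖ ^ 2) + (∫ x in Ω, inner ℝ (gradient u₀ x) (W x)) +
          (∫ x in Ω, inner ℝ (gradient u₁ x) (W x)) +
          ∫ x in Ω, inner ℝ (gradient u₀ x) (gradient u₁ x) := by
        rw [integral_add, integral_add, integral_add]
        all_goals refine hint _ ?_; fun_prop
    _ = _ := by rw [e₀, e₁, e₂, add_zero, add_zero]

end HasGaussGreen


theorem energy_formula_double_integral_general
    (Ω : Set R3) (hΩopen : IsOpen Ω) (hΩbd : Bornology.IsBounded Ω)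
    (σ : Measure R3) (hσ : σ = (μH[2] : Measure R3).restrict (frontier Ω))
    (n : R3 → R3)
    (hGG : ∀ (F : R3 → R3) (U : Set R3), IsOpen U → closure Ω ⊆ U → ContDiffOn ℝ 1 F U →
      ∫ x in Ω, vdiv F x = ∫ y, (inner ℝ (F y) (n y) : ℝ) ∂σ)
    (m : R3 → R3) (Um : Set R3) (hUmopen : IsOpen Um) (hUm : closure Ω ⊆ Um)
    (hm : ContDiffOn ℝ 1 m Um)
    (u₀ : R3 → ℝ) (U₀ : Set R3) (hU₀open : IsOpen U₀) (hU₀ : closure Ω ⊆ U₀)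
    (hu₀ : ContDiffOn ℝ 2 u₀ U₀) (hu₀pde : ∀ x ∈ Ω, lap u₀ x = vdiv m x)
    (hu₀Γ : ∀ y ∈ frontier Ω, u₀ y = 0)
    (ψ : R3 → ℝ) (hψ : ∀ y, ψ y = (inner ℝ (m y - gradient u₀ y) (n y) : ℝ))
    (u₁ : R3 → ℝ) (hu₁def : ∀ x, u₁ x = (4 * π)⁻¹ * ∫ y, ψ y / ‖x - y‖ ∂σ)
    (U₁ : Set R3) (hU₁open : IsOpen U₁) (hU₁ : closure Ω ⊆ U₁)
    (hu₁C1 : ContDiffOn ℝ 1 u₁ U₁) (hu₁C2 : ContDiffOn ℝ 2 u₁ Ω)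
    (hu₁harm : ∀ x ∈ Ω, lap u₁ x = 0) :
    ∫ x in Ω, (inner ℝ (m x) (gradient u₀ x + gradient u₁ x) : ℝ) =
      (∫ x in Ω, ‖gradient u₀ x‖ ^ 2) +
        (4 * π)⁻¹ * ∫ x, (∫ y, ψ x * ψ y / ‖x - y‖ ∂σ) ∂σ := by
  set U := Um ∩ U₀ ∩ U₁
  have hU : IsOpen U := (hUmopen.inter hU₀open).inter hU₁open
  have hΩU : closure Ω ⊆ U := subset_inter (subset_inter hUm hU₀) hU₁
  have hm' : ContDiffOn ℝ 1 m U := hm.mono fun x hx => hx.1.1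
  have hu₀' : ContDiffOn ℝ 2 u₀ U := hu₀.mono fun x hx => hx.1.2
  have hg₀ : ContDiffOn ℝ 1 (gradient u₀) U := hu₀'.gradient_of_isOpen hU (by norm_num)
  have hW_div : ∀ x ∈ Ω, vdiv (fun y => m y - gradient u₀ y) x = 0 := fun x hx => by
    have hxU : U ∈ 𝓝 x := hU.mem_nhds (hΩU (subset_closure hx))
    rw [vdiv_sub ((hm'.differentiableOn one_ne_zero).differentiableAt hxU)
      ((hg₀.differentiableOn one_ne_zero).differentiableAt hxU)]
    exact sub_eq_zero.2 (hu₀pde x hx).symm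
  have hsingle : ∫ y, u₁ y * ψ y ∂σ = (4 * π)⁻¹ * ∫ x, (∫ y, ψ x * ψ y / ‖x - y‖ ∂σ) ∂σ := by
    rw [← integral_const_mul]
    refine integral_congr_ae (ae_of_all _ fun x => ?_)
    simp only [hu₁def, mul_div_assoc, integral_const_mul]
    ring
  have key := HasGaussGreen.setIntegral_inner_add_gradient hGG
    (hσ ▸ ae_restrict_mem isClosed_frontier.measurableSet) hΩopen hΩbd hU hΩU (hm'.sub hg₀)
    hW_div (hu₀'.of_le (by norm_num)) hu₀Γ (hu₁C1.mono fun x hx => hx.2) hu₁C2 hu₁harm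
  simpa only [sub_add_cancel, ← hψ, hsingle] using key

/-- Energy formula (Theorem 1, double-integral form):
e_d = ∫_Ω ‖∇u₀‖² dx + (1/4π) ∫_Γ ∫_Γ ψ(x)ψ(y)/‖x−y‖ dσ(y) dσ(x)
with ψ = m·n − ∂ₙu₀. -/
theorem energy_formula_double_integral
    (Ω : Set R3) (hΩopen : IsOpen Ω) (hΩbd : Bornology.IsBounded Ω)
    (σ : Measure R3) (hσ : σ = (μH[2] : Measure R3).restrict (frontier Ω))
    (hσfin : σ Set.univ < ⊤)
    (n : R3 → R3) (hn : ∀ y ∈ frontier Ω, ‖n y‖ = 1)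
    (hGG : ∀ (F : R3 → R3) (U : Set R3), IsOpen U → closure Ω ⊆ U → ContDiffOn ℝ 1 F U →
      ∫ x in Ω, vdiv F x = ∫ y, (inner ℝ (F y) (n y) : ℝ) ∂σ)
    (m : R3 → R3) (Um : Set R3) (hUmopen : IsOpen Um) (hUm : closure Ω ⊆ Um)
    (hm : ContDiffOn ℝ 1 m Um)
    (u₀ : R3 → ℝ) (U₀ : Set R3) (hU₀open : IsOpen U₀) (hU₀ : closure Ω ⊆ U₀)
    (hu₀ : ContDiffOn ℝ 2 u₀ U₀) (hu₀pde : ∀ x ∈ Ω, lap u₀ x = vdiv m x)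
    (hu₀Γ : ∀ y ∈ frontier Ω, u₀ y = 0)
    (ψ : R3 → ℝ) (hψ : ∀ y, ψ y = (inner ℝ (m y - gradient u₀ y) (n y) : ℝ))
    (u₁ : R3 → ℝ) (hu₁def : ∀ x, u₁ x = (4 * π)⁻¹ * ∫ y, ψ y / ‖x - y‖ ∂σ)
    (U₁ : Set R3) (hU₁open : IsOpen U₁) (hU₁ : closure Ω ⊆ U₁)
    (hu₁C1 : ContDiffOn ℝ 1 u₁ U₁) (hu₁C2 : ContDiffOn ℝ 2 u₁ Ω)
    (hu₁harm : ∀ x ∈ Ω, lap u₁ x = 0)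
    (hint : Integrable (fun p : R3 × R3 => ψ p.1 * ψ p.2 / ‖p.1 - p.2‖) (σ.prod σ)) :
    ∫ x in Ω, (inner ℝ (m x) (gradient u₀ x + gradient u₁ x) : ℝ) =
      (∫ x in Ω, ‖gradient u₀ x‖ ^ 2) +
        (4 * π)⁻¹ * ∫ x, (∫ y, ψ x * ψ y / ‖x - y‖ ∂σ) ∂σ :=
  energy_formula_double_integral_general Ω hΩopen hΩbd σ hσ n hGG m Um hUmopen hUm hm u₀ U₀ hU₀open
    hU₀ hu₀ hu₀pde hu₀Γ ψ hψ u₁ hu₁def U₁ hU₁open hU₁ hu₁C1 hu₁C2 hu₁harm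
end
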